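/- For every H ∈ (0,1), the squared autocorrelation sequence of lag-1 second-order fractional Brownian increments is summable: the series Σ_{h=1}^{∞} d_H(h)² converges, where d_H(h) = −|h−2|^{2H} + 4|h−1|^{2H} − 6|h|^{2H} + 4|h+1|^{2H} − |h+2|^{2H}. Equivalently, Σ_{h=1}^{∞} ρ^H_{1,1}(h)² < ∞ with ρ^H_{1,1}(h) = d_H(h)/(2(4 − 2^{2H})). -/

import Mathlib

/-!
For `h ≥ 3`, `d_H(h)` is minus the fourth forward difference of `t ↦ t ^ (2H)` at `h - 2`.
The mean value theorem, iterated, writes an `n`-th forward difference of `t ↦ t ^ p` as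
`p (p - 1) ⋯ (p - n + 1) c ^ (p - n)` at some intermediate point `c`, so
`|d_H(h)| ≤ C (h - 2) ^ (2H - 4)` and `d_H(h) ^ 2 = O(h ^ (4H - 8))`, which is summable as soon as
`4H - 8 < -1`.
-/

/-- The autocovariance numerator of lag-1 second-order fractional Brownian
increments with Hurst index `H`. -/
noncomputable def dH (H : ℝ) (h : ℤ) : ℝ :=
  -(|(h : ℝ) - 2| ^ (2 * H)) + 4 * |(h : ℝ) - 1| ^ (2 * H) - 6 * |(h : ℝ)| ^ (2 * H)
    + 4 * |(h : ℝ) + 1| ^ (2 * H) - |(h : ℝ) + 2| ^ (2 * H)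

open Set Polynomial
open scoped fwdDiff

theorem exists_fwdDiff_eq_of_hasDerivAt {f f' : ℝ → ℝ} {a y : ℝ}
    (hf : ∀ t > a, HasDerivAt f (f' t) t) (hy : a < y) :
    ∃ c ∈ Ioo y (y + 1), Δ_[1] f y = f' c := by
  obtain ⟨c, hc, hslope⟩ := exists_hasDerivAt_eq_slope f f' (lt_add_one y)
    (fun t ht => (hf t (hy.trans_le ht.1)).continuousAt.continuousWithinAt)
    (fun t ht => hf t (hy.trans ht.1))
  refine ⟨c, hc, ?_⟩
  rw [hslope, add_sub_cancel_left, div_one, fwdDiff]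

theorem exists_fwdDiff_iter_eq_of_hasDerivAt {a : ℝ} (F : ℕ → ℝ → ℝ)
    (hF : ∀ k, ∀ t > a, HasDerivAt (F k) (F (k + 1) t) t) (n : ℕ) {y : ℝ} (hy : a < y) :
    ∃ c ∈ Icc y (y + n), (Δ_[1])^[n] (F 0) y = F n c := by
  induction n generalizing F y with
  | zero => exact ⟨y, by simp, rfl⟩
  | succ n ih =>
    have hΔF : ∀ k, ∀ t > a, HasDerivAt (Δ_[1] (F k)) (Δ_[1] (F (k + 1)) t) t := fun k t ht =>
      ((hF k (t + 1) (by linarith)).comp_add_const t 1).sub (hF k t ht)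
    obtain ⟨c, hc, hc_eq⟩ := ih (fun k => Δ_[1] (F k)) hΔF hy
    obtain ⟨c', hc', hc'_eq⟩ := exists_fwdDiff_eq_of_hasDerivAt (hF n) (hy.trans_le hc.1)
    refine ⟨c', ⟨hc.1.trans hc'.1.le, ?_⟩, ?_⟩
    · push_cast
      linarith [hc.2, hc'.2]
    · rw [Function.iterate_succ_apply, hc_eq, hc'_eq]

theorem hasDerivAt_descPochhammer_eval_mul_rpow (p : ℝ) (k : ℕ) {t : ℝ} (ht : 0 < t) :
    HasDerivAt (fun t => (descPochhammer ℝ k).eval p * t ^ (p - k))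
      ((descPochhammer ℝ (k + 1)).eval p * t ^ (p - (k + 1 : ℕ))) t := by
  refine (((hasDerivAt_id t).rpow_const (p := p - k) (Or.inl ht.ne')).const_mul
    ((descPochhammer ℝ k).eval p)).congr_deriv ?_
  rw [descPochhammer_succ_eval]
  push_cast
  simp only [id]
  ring_nf

theorem exists_fwdDiff_iter_rpow_eq (p : ℝ) (n : ℕ) {y : ℝ} (hy : 0 < y) :
    ∃ c ∈ Icc y (y + n),
      (Δ_[1])^[n] (fun t => t ^ p) y = (descPochhammer ℝ n).eval p * c ^ (p - n) := by
  simpa using exists_fwdDiff_iter_eq_of_hasDerivAt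
    (fun k t => (descPochhammer ℝ k).eval p * t ^ (p - k))
    (fun k t ht => hasDerivAt_descPochhammer_eval_mul_rpow p k ht) n hy

theorem abs_fwdDiff_iter_rpow_le {p : ℝ} {n : ℕ} (hp : p ≤ n) {y : ℝ} (hy : 0 < y) :
    |(Δ_[1])^[n] (fun t => t ^ p) y| ≤ |(descPochhammer ℝ n).eval p| * y ^ (p - n) := by
  obtain ⟨c, hc, hc_eq⟩ := exists_fwdDiff_iter_rpow_eq p n hy
  rw [hc_eq, abs_mul, abs_of_pos (Real.rpow_pos_of_pos (hy.trans_le hc.1) _)]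
  exact mul_le_mul_of_nonneg_left (Real.rpow_le_rpow_of_nonpos hy hc.1 (sub_nonpos.2 hp))
    (abs_nonneg _)

theorem dH_eq_neg_fwdDiff_iter {H : ℝ} {h : ℤ} (hh : 2 ≤ h) :
    dH H h = -(Δ_[1])^[4] (fun t => t ^ (2 * H)) ((h : ℝ) - 2) := by
  have hh' : (2 : ℝ) ≤ h := by exact_mod_cast hh
  rw [dH, abs_of_nonneg (by linarith : (0 : ℝ) ≤ h - 2),
    abs_of_nonneg (by linarith : (0 : ℝ) ≤ h - 1), abs_of_nonneg (by linarith : (0 : ℝ) ≤ h),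
    abs_of_nonneg (by linarith : (0 : ℝ) ≤ h + 1), abs_of_nonneg (by linarith : (0 : ℝ) ≤ h + 2),
    fwdDiff_iter_eq_sum_shift]
  simp [Finset.sum_range_succ, Nat.choose]
  ring_nf

theorem abs_dH_le {H : ℝ} (hH : H ≤ 2) {h : ℤ} (hh : 3 ≤ h) :
    |dH H h| ≤ |(descPochhammer ℝ 4).eval (2 * H)| * ((h : ℝ) - 2) ^ (2 * H - 4) := by
  have hh' : (3 : ℝ) ≤ h := by exact_mod_cast hh
  rw [dH_eq_neg_fwdDiff_iter (by omega), abs_neg]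
  simpa using
    abs_fwdDiff_iter_rpow_le (n := 4) (by push_cast; linarith) (by linarith : (0 : ℝ) < h - 2)

theorem summable_dH_sq {H : ℝ} (hH : H < 7 / 4) :
    Summable (fun h : ℕ => dH H (h + 1) ^ 2) := by
  set C := |(descPochhammer ℝ 4).eval (2 * H)|
  rw [← summable_nat_add_iff 2]
  have hmajorant : Summable (fun n : ℕ => C ^ 2 * ((n : ℝ) + 1) ^ (2 * (2 * H - 4))) := by
    have hexp : 2 * (2 * H - 4) < -1 := by linarith
    refine ((summable_nat_add_iff 1).2 (Real.summable_nat_rpow.2 hexp)).mul_left _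
      |>.congr fun n => by push_cast; rfl
  refine Summable.of_nonneg_of_le (fun _ => sq_nonneg _) (fun n => ?_) hmajorant
  have hn : (0 : ℝ) < n + 1 := by positivity
  have hb := abs_dH_le (by linarith) (h := (n + 2 : ℕ) + 1) (by omega)
  have hx : (((n + 2 : ℕ) + 1 : ℤ) : ℝ) - 2 = n + 1 := by push_cast; ring
  rw [hx] at hb
  calc dH H ((n + 2 : ℕ) + 1) ^ 2 = |dH H ((n + 2 : ℕ) + 1)| ^ 2 := (sq_abs _).symm
    _ ≤ (C * ((n : ℝ) + 1) ^ (2 * H - 4)) ^ 2 := by gcongr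
    _ = C ^ 2 * ((n : ℝ) + 1) ^ (2 * (2 * H - 4)) := by
        rw [mul_pow, ← Real.rpow_mul_natCast hn.le]
        congr 2
        push_cast
        ring

/-- Summability of the squared autocorrelations of lag-1 second-order
fractional Brownian increments. -/
theorem fbm_squared_autocorrelation_summable
    (H : ℝ) (hH : H ∈ Set.Ioo (0 : ℝ) 1) :
    Summable (fun h : ℕ => (dH H ((h : ℤ) + 1)) ^ 2)
      ∧ Summable (fun h : ℕ =>
          (dH H ((h : ℤ) + 1) / (2 * (4 - (2 : ℝ) ^ (2 * H)))) ^ 2) := by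
  have hsum := summable_dH_sq (H := H) (by linarith [hH.2])
  refine ⟨hsum, ?_⟩
  simpa only [div_pow] using hsum.div_const _
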